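/- arXiv:quant-ph/0703141 — 3 statements merged into one kernel-verified Lean document; each statement's English description precedes it below -/
import Mathlib

section
/- Let K be a closed, pointed, generating convex cone in a finite-dimensional real inner product space V, let W be a finite-dimensional real inner product space, let A : V → W be a linear map with trivial kernel, and let b ∈ W be nonzero. Then the primal set {x ∈ V : A x = b, x ∈ K} is empty if and only if the dual set {y ∈ W : A* y ∈ K*, ⟨b, y⟩ < 0} is nonempty, where A* is the adjoint of A and K* = {v ∈ V : ⟨v, k⟩ ≥ 0 for all k ∈ K} is the dual cone. -/
open scoped InnerProductSpace

/-! The image `A K` of the cone is closed, because an injective linear map between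
finite-dimensional spaces is a closed embedding. The primal set is empty exactly when `b ∉ A K`,
and Farkas' lemma for the closed cone `A K` produces a `y` with `⟪A K, y⟫ ≥ 0 > ⟪b, y⟫`;
moving `A` across the inner product turns the first condition into `A* y ∈ K*`. -/

namespace ConvexCone

variable {E F : Type*} [NormedAddCommGroup E] [InnerProductSpace ℝ E]
  [NormedAddCommGroup F] [InnerProductSpace ℝ F]

theorem isClosed_map_of_injective [FiniteDimensional ℝ E] {K : ConvexCone ℝ E}
    (hK : IsClosed (K : Set E)) {A : E →ₗ[ℝ] F} (hA : Function.Injective A) :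
    IsClosed (K.map A : Set F) :=
  (LinearMap.isClosedEmbedding_of_injective (LinearMap.ker_eq_bot.mpr hA)).isClosedMap _ hK

theorem notMem_iff_exists_inner_neg [CompleteSpace F] {C : ConvexCone ℝ F}
    (hne : (C : Set F).Nonempty) (hC : IsClosed (C : Set F)) {b : F} :
    b ∉ C ↔ ∃ y, (∀ c ∈ C, 0 ≤ ⟪c, y⟫_ℝ) ∧ ⟪b, y⟫_ℝ < 0 := by
  refine ⟨fun hb ↦ ?_, fun ⟨y, hCy, hby⟩ hb ↦ hby.not_ge (hCy b hb)⟩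
  let P : ProperCone ℝ F := ⟨C.toPointedCone (.of_nonempty_of_isClosed hne hC), hC⟩
  exact P.hyperplane_separation' hb

theorem forall_inner_adjoint_nonneg_iff [FiniteDimensional ℝ E] [FiniteDimensional ℝ F]
    (K : ConvexCone ℝ E) (A : E →ₗ[ℝ] F) (y : F) :
    (∀ k ∈ K, 0 ≤ ⟪LinearMap.adjoint A y, k⟫_ℝ) ↔ ∀ w ∈ K.map A, 0 ≤ ⟪w, y⟫_ℝ := by
  simp only [mem_map, forall_exists_index, and_imp, forall_apply_eq_imp_iff₂,
    LinearMap.adjoint_inner_left, real_inner_comm]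

end ConvexCone

theorem conic_feasibility_duality_general
    {V W : Type*} [NormedAddCommGroup V] [InnerProductSpace ℝ V] [FiniteDimensional ℝ V]
    [NormedAddCommGroup W] [InnerProductSpace ℝ W] [FiniteDimensional ℝ W]
    (K : ConvexCone ℝ V) (hKclosed : IsClosed (K : Set V))
    (hKgen : ∀ v : V, ∃ a ∈ K, ∃ b ∈ K, v = a - b)
    (A : V →ₗ[ℝ] W) (hA : LinearMap.ker A = ⊥)
    (b : W) :
    (¬ ∃ x : V, A x = b ∧ x ∈ K) ↔
      ∃ y : W, (∀ k ∈ K, 0 ≤ (inner ℝ (LinearMap.adjoint A y) k : ℝ)) ∧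
        (inner ℝ b y : ℝ) < 0 := by
  obtain ⟨a, ha, -⟩ := hKgen 0
  have hAK : IsClosed (K.map A : Set W) :=
    K.isClosed_map_of_injective hKclosed (LinearMap.ker_eq_bot.mp hA)
  have hprimal : (¬ ∃ x : V, A x = b ∧ x ∈ K) ↔ b ∉ K.map A := by
    simp only [ConvexCone.mem_map, and_comm]
  simp_rw [hprimal, ConvexCone.forall_inner_adjoint_nonneg_iff]
  exact ConvexCone.notMem_iff_exists_inner_neg ⟨A a, ConvexCone.mem_map.mpr ⟨a, ha, rfl⟩⟩ hAK

theorem conic_feasibility_duality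
    {V W : Type*} [NormedAddCommGroup V] [InnerProductSpace ℝ V] [FiniteDimensional ℝ V]
    [NormedAddCommGroup W] [InnerProductSpace ℝ W] [FiniteDimensional ℝ W]
    (K : ConvexCone ℝ V) (hKclosed : IsClosed (K : Set V))
    (hKpointed : ∀ x : V, x ∈ K → -x ∈ K → x = 0)
    (hKgen : ∀ v : V, ∃ a ∈ K, ∃ b ∈ K, v = a - b)
    (A : V →ₗ[ℝ] W) (hA : LinearMap.ker A = ⊥)
    (b : W) (hb : b ≠ 0) :
    (¬ ∃ x : V, A x = b ∧ x ∈ K) ↔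
      ∃ y : W, (∀ k ∈ K, 0 ≤ (inner ℝ (LinearMap.adjoint A y) k : ℝ)) ∧
        (inner ℝ b y : ℝ) < 0 :=
  conic_feasibility_duality_general K hKclosed hKgen A hA b
end

section
/- Any positive semidefinite matrix ρ on a finite-dimensional Hilbert space H₁ admits a purification: if dim H₂ ≥ rank ρ, then there exists a vector Ψ ∈ H₁ ⊗ H₂ such that the partial trace over H₂ of the projection |Ψ⟩⟨Ψ| equals ρ. -/
/-!
Diagonalise `ρ = U diag(μ) Uᴴ` with `μ ≥ 0`. Then `ρ = B Bᴴ` for `B = U diag(√μ)`, whose columns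
vanish outside the `rank ρ` indices with `μ k ≠ 0`. Deleting the zero columns and padding with
zero columns up to `d₂` does not change `B Bᴴ`, and the entries of the resulting `d₁ × d₂`
matrix are the coefficients of `Ψ`.
-/

open ComplexOrder Function

namespace Matrix

variable {m n p 𝕜 α : Type*} [Fintype n] [Fintype p]

theorem submatrix_mul_conjTranspose_submatrix [NonUnitalNonAssocSemiring α] [StarRing α]
    (B : Matrix m n α) {f : p → n} (hf : Injective f)
    (hB : ∀ i, ∀ k ∉ Set.range f, B i k = 0) :
    B.submatrix id f * (B.submatrix id f)ᴴ = B * Bᴴ := by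
  ext i j
  simp only [mul_apply, conjTranspose_apply, submatrix_apply, id]
  exact Fintype.sum_of_injective f hf _ _ (fun k hk => by simp [hB i k hk]) fun _ => rfl

theorem exists_mul_conjTranspose_eq_of_injective [NonUnitalNonAssocSemiring α] [StarRing α]
    (B : Matrix m n α) {e : n → p} (he : Injective e) :
    ∃ C : Matrix m p α, C * Cᴴ = B * Bᴴ := by
  let C : Matrix m p α := of fun i => extend e (B i) 0
  have hC : C.submatrix id e = B := by
    ext i k
    exact he.extend_apply _ _ _
  refine ⟨C, ?_⟩
  conv_rhs => rw [← hC]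
  exact (submatrix_mul_conjTranspose_submatrix C he fun i k hk => extend_apply' _ _ _ hk).symm

variable [RCLike 𝕜] [Fintype m] [DecidableEq m]

theorem PosSemidef.eigenvectorUnitary_mul_diagonal_sqrt_mul_conjTranspose {A : Matrix m m 𝕜}
    (hA : A.PosSemidef) :
    (hA.isHermitian.eigenvectorUnitary : Matrix m m 𝕜) *
      diagonal (fun k => (√(hA.isHermitian.eigenvalues k) : 𝕜)) *
      ((hA.isHermitian.eigenvectorUnitary : Matrix m m 𝕜) *
      diagonal (fun k => (√(hA.isHermitian.eigenvalues k) : 𝕜)))ᴴ = A := by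
  have hsq : (diagonal fun k => (√(hA.isHermitian.eigenvalues k) : 𝕜)) *
      (diagonal fun k => (√(hA.isHermitian.eigenvalues k) : 𝕜))ᴴ =
      diagonal (RCLike.ofReal ∘ hA.isHermitian.eigenvalues) := by
    rw [diagonal_conjTranspose, diagonal_mul_diagonal]
    congr 1
    ext k
    simp only [Pi.star_apply, RCLike.star_def, RCLike.conj_ofReal, ← RCLike.ofReal_mul,
      Real.mul_self_sqrt (hA.eigenvalues_nonneg k)]
    rfl
  conv_rhs => rw [hA.isHermitian.spectral_theorem, Unitary.conjStarAlgAut_apply]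
  simp only [conjTranspose_mul, Matrix.mul_assoc, star_eq_conjTranspose]
  rw [← Matrix.mul_assoc _ _ (_ᴴ), hsq]

theorem PosSemidef.exists_mul_conjTranspose_eq_of_rank_le {A : Matrix m m 𝕜}
    (hA : A.PosSemidef) (hrank : A.rank ≤ Fintype.card p) :
    ∃ C : Matrix m p 𝕜, C * Cᴴ = A := by
  set μ := hA.isHermitian.eigenvalues
  obtain ⟨e⟩ : Nonempty ({k // μ k ≠ 0} ↪ p) :=
    Embedding.nonempty_of_card_le (hA.isHermitian.rank_eq_card_non_zero_eigs ▸ hrank)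
  set B := (hA.isHermitian.eigenvectorUnitary : Matrix m m 𝕜) * diagonal fun k => (√(μ k) : 𝕜)
  have hB : ∀ i, ∀ k ∉ Set.range (Subtype.val : {k // μ k ≠ 0} → m), B i k = 0 := by
    intro i k hk
    have hμ : μ k = 0 := by simpa using hk
    simp [B, mul_diagonal, hμ]
  obtain ⟨C, hC⟩ := exists_mul_conjTranspose_eq_of_injective (B.submatrix id Subtype.val) e.injective
  exact ⟨C, by rw [hC, submatrix_mul_conjTranspose_submatrix B Subtype.val_injective hB,
    hA.eigenvectorUnitary_mul_diagonal_sqrt_mul_conjTranspose]⟩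

end Matrix

/-- Any PSD operator `ρ` on a `d₁`-dimensional space admits a purification into a second
factor of dimension `d₂ ≥ rank ρ`: there is `Ψ ∈ H₁ ⊗ H₂` with `tr_{H₂} |Ψ⟩⟨Ψ| = ρ`. -/
theorem purification_exists
    {d₁ d₂ : ℕ} (ρ : Matrix (Fin d₁) (Fin d₁) ℂ) (hρ : ρ.PosSemidef)
    (hrank : ρ.rank ≤ d₂) :
    ∃ Ψ : Fin d₁ × Fin d₂ → ℂ,
      ∀ i j, (∑ k, Ψ (i, k) * star (Ψ (j, k))) = ρ i j := by
  obtain ⟨C, hC⟩ := hρ.exists_mul_conjTranspose_eq_of_rank_le (p := Fin d₂) (by simpa using hrank)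
  exact ⟨fun x => C x.1 x.2, fun i j => by rw [← hC, Matrix.mul_apply]; rfl⟩
end

section
/- If Ψ and Φ are two vectors in H₁ ⊗ H₂ that purify the same positive semidefinite operator ρ on H₁ (i.e. tr_{H₂}|Ψ⟩⟨Ψ| = tr_{H₂}|Φ⟩⟨Φ| = ρ), then there exists a unitary U on H₂ with (I ⊗ U)Ψ = Φ. -/
/-!
The rows `Ψ(i, ·)` and `Φ(i, ·)` are two families of vectors in `ℂ^{d₂}` with the same Gram
matrix, namely `ρ` up to transposition. Equal Gram matrices make `∑ cᵢ Ψ(i, ·) ↦ ∑ cᵢ Φ(i, ·)` a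
well-defined isometry from the span of the first family onto the span of the second, and in
finite dimension it extends to a unitary of the whole space.
-/

open ComplexOrder
open scoped InnerProductSpace

theorem LinearMap.exists_linearIsometry_range_of_norm_eq {R X E F : Type*} [Ring R]
    [AddCommGroup X] [Module R X] [NormedAddCommGroup E] [Module R E]
    [NormedAddCommGroup F] [Module R F] (f : X →ₗ[R] E) (g : X →ₗ[R] F)
    (h : ∀ x, ‖f x‖ = ‖g x‖) :
    ∃ L : range f →ₗᵢ[R] F, ∀ x, L ⟨f x, mem_range_self f x⟩ = g x := by
  have hker : ker f ≤ ker g := fun x hx => by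
    rw [mem_ker, ← norm_eq_zero, ← h, hx, norm_zero]
  set L := (ker f).liftQ g hker ∘ₗ f.quotKerEquivRange.symm.toLinearMap
  have hL : ∀ x, L ⟨f x, mem_range_self f x⟩ = g x := fun x => by
    have : f.quotKerEquivRange (Submodule.Quotient.mk x) = ⟨f x, mem_range_self f x⟩ :=
      Subtype.ext (f.quotKerEquivRange_apply_mk x)
    simp [L, ← this]
  refine ⟨⟨L, ?_⟩, hL⟩
  rintro ⟨_, x, rfl⟩
  rw [hL, ← h]
  rfl

theorem LinearMap.exists_linearIsometryEquiv_of_norm_eq {𝕜 X E : Type*} [RCLike 𝕜]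
    [AddCommGroup X] [Module 𝕜 X] [NormedAddCommGroup E] [InnerProductSpace 𝕜 E]
    [FiniteDimensional 𝕜 E] (f g : X →ₗ[𝕜] E) (h : ∀ x, ‖f x‖ = ‖g x‖) :
    ∃ U : E ≃ₗᵢ[𝕜] E, ∀ x, U (f x) = g x := by
  obtain ⟨L, hL⟩ := f.exists_linearIsometry_range_of_norm_eq g h
  exact ⟨L.extend.toLinearIsometryEquiv rfl, fun x => (L.extend_apply _).trans (hL x)⟩

theorem exists_linearIsometryEquiv_of_inner_eq {𝕜 E ι : Type*} [RCLike 𝕜]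
    [NormedAddCommGroup E] [InnerProductSpace 𝕜 E] [FiniteDimensional 𝕜 E] (v w : ι → E)
    (h : ∀ i j, ⟪v i, v j⟫_𝕜 = ⟪w i, w j⟫_𝕜) :
    ∃ U : E ≃ₗᵢ[𝕜] E, ∀ i, U (v i) = w i := by
  have hinner : ∀ c, ⟪Finsupp.linearCombination 𝕜 v c, Finsupp.linearCombination 𝕜 v c⟫_𝕜 =
      ⟪Finsupp.linearCombination 𝕜 w c, Finsupp.linearCombination 𝕜 w c⟫_𝕜 := fun c => by
    simp only [Finsupp.linearCombination_apply, Finsupp.sum_inner, Finsupp.inner_sum,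
      inner_smul_left, inner_smul_right, h]
  obtain ⟨U, hU⟩ := (Finsupp.linearCombination 𝕜 v).exists_linearIsometryEquiv_of_norm_eq
    (Finsupp.linearCombination 𝕜 w) fun c => by
      rw [@norm_eq_sqrt_re_inner 𝕜, @norm_eq_sqrt_re_inner 𝕜, hinner]
  exact ⟨U, fun i => by simpa using hU (Finsupp.single i 1)⟩

theorem LinearIsometryEquiv.exists_mem_unitaryGroup_apply_eq {𝕜 n : Type*} [RCLike 𝕜]
    [Fintype n] [DecidableEq n] (U : EuclideanSpace 𝕜 n ≃ₗᵢ[𝕜] EuclideanSpace 𝕜 n) :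
    ∃ A ∈ Matrix.unitaryGroup n 𝕜, ∀ v k, U v k = ∑ l, A k l * v l := by
  let b := EuclideanSpace.basisFun n 𝕜
  refine ⟨LinearMap.toMatrix b.toBasis b.toBasis U.toLinearMap,
    U.toMatrix_mem_unitaryGroup b b, fun v k => ?_⟩
  have := congrFun (LinearMap.toMatrix_mulVec_repr b.toBasis b.toBasis U.toLinearMap v) k
  simpa [b, Matrix.mulVec, dotProduct] using this.symm

theorem purifications_related_by_unitary_general
    {d₁ d₂ : ℕ}
    (ρ : Matrix (Fin d₁) (Fin d₁) ℂ)
    (Ψ Φ : Fin d₁ × Fin d₂ → ℂ)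
    (hΨ : ∀ i j, (∑ k, Ψ (i, k) * star (Ψ (j, k))) = ρ i j)
    (hΦ : ∀ i j, (∑ k, Φ (i, k) * star (Φ (j, k))) = ρ i j) :
    ∃ U ∈ Matrix.unitaryGroup (Fin d₂) ℂ,
      ∀ i k, Φ (i, k) = ∑ l, U k l * Ψ (i, l) := by
  let row (χ : Fin d₁ × Fin d₂ → ℂ) (i : Fin d₁) : EuclideanSpace ℂ (Fin d₂) :=
    WithLp.toLp 2 fun k => χ (i, k)
  have gram : ∀ i j, ⟪row Ψ i, row Ψ j⟫_ℂ = ⟪row Φ i, row Φ j⟫_ℂ := fun i j => by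
    rw [EuclideanSpace.inner_toLp_toLp, EuclideanSpace.inner_toLp_toLp]
    exact (hΨ j i).trans (hΦ j i).symm
  obtain ⟨V, hV⟩ := exists_linearIsometryEquiv_of_inner_eq (row Ψ) (row Φ) gram
  obtain ⟨U, hU, hUV⟩ := V.exists_mem_unitaryGroup_apply_eq
  exact ⟨U, hU, fun i k => (congrArg (· k) (hV i)).symm.trans (hUV (row Ψ i) k)⟩

/-- Two purifications of the same PSD operator `ρ` are related by a unitary on the
second factor: `(I ⊗ U) Ψ = Φ`. -/
theorem purifications_related_by_unitary
    {d₁ d₂ : ℕ} (hd : d₁ ≤ d₂)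
    (ρ : Matrix (Fin d₁) (Fin d₁) ℂ) (hρ : ρ.PosSemidef)
    (Ψ Φ : Fin d₁ × Fin d₂ → ℂ)
    (hΨ : ∀ i j, (∑ k, Ψ (i, k) * star (Ψ (j, k))) = ρ i j)
    (hΦ : ∀ i j, (∑ k, Φ (i, k) * star (Φ (j, k))) = ρ i j) :
    ∃ U ∈ Matrix.unitaryGroup (Fin d₂) ℂ,
      ∀ i k, Φ (i, k) = ∑ l, U k l * Ψ (i, l) :=
  purifications_related_by_unitary_general ρ Ψ Φ hΨ hΦ
end
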